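/- With the action (B,r)·F_{U,ρ} = r·det(B)·F_{BU,ρ}, the elements F_{e₁,ρ} and F_{e₁,ρ̃} with ρ, ρ̃ ≥ 0 and ρ ≠ ρ̃ lie in different orbits of O(2) × ℝ*. -/

import Mathlib

/-- The Lorentz force F_{U,ρ} on h₃, with U = βe₁ + αe₂ encoded as
    `U = ![β, α]`, given by the matrix [[0,-ρ,-β],[ρ,0,-α],[β,α,0]]. -/
def Fm (U : Fin 2 → ℝ) (ρ : ℝ) : Matrix (Fin 3) (Fin 3) ℝ :=
  ![![0, -ρ, -(U 0)], ![ρ, 0, -(U 1)], ![U 0, U 1, 0]]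

/-!
Scaling commutes with the parametrisation, `c • F_{U,ρ} = F_{cU,cρ}`, and `(U, ρ) ↦ F_{U,ρ}` is
injective, so `c • F_{BU,ρ} = F_{e₁,ρ'}` with `c = r det B` means `c • Be₁ = e₁` and `cρ = ρ'`.
Since `B` is orthogonal, `|Be₁| = |e₁| = 1`, which forces `c = ±1`; with `ρ, ρ' ≥ 0` both signs
give `ρ = ρ'`.
-/

open Matrix

theorem smul_Fm (c : ℝ) (U : Fin 2 → ℝ) (ρ : ℝ) : c • Fm U ρ = Fm (c • U) (c * ρ) := by
  ext i j
  rw [Matrix.smul_apply]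
  fin_cases i <;> fin_cases j <;> simp [Fm]

theorem eq_and_eq_of_Fm_eq {U V : Fin 2 → ℝ} {ρ σ : ℝ} (h : Fm U ρ = Fm V σ) : U = V ∧ ρ = σ := by
  have hU0 := congrFun (congrFun h 2) 0
  have hU1 := congrFun (congrFun h 2) 1
  have hρ := congrFun (congrFun h 1) 0
  simp only [Fm, cons_val, cons_val_zero, cons_val_one] at hU0 hU1 hρ
  refine ⟨funext fun i => ?_, hρ⟩
  fin_cases i
  exacts [hU0, hU1]

theorem Matrix.dotProduct_mulVec_self_of_transpose_mul_self {n R : Type*} [Fintype n]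
    [DecidableEq n] [CommSemiring R] {B : Matrix n n R} (hB : B.transpose * B = 1) (v : n → R) :
    (B *ᵥ v) ⬝ᵥ (B *ᵥ v) = v ⬝ᵥ v := by
  rw [dotProduct_mulVec, ← vecMul_transpose, vecMul_vecMul, hB, vecMul_one]

theorem sq_eq_one_of_smul_eq {n R : Type*} [Fintype n] [Field R] [LinearOrder R]
    [IsStrictOrderedRing R] {c : R} {v w : n → R} (h : c • w = v) (hwv : w ⬝ᵥ w = v ⬝ᵥ v)
    (hv : v ≠ 0) : c ^ 2 = 1 := by
  have hvv : v ⬝ᵥ v ≠ 0 := mt dotProduct_self_eq_zero.mp hv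
  have : c ^ 2 * (v ⬝ᵥ v) = v ⬝ᵥ v :=
    calc c ^ 2 * (v ⬝ᵥ v) = c ^ 2 * (w ⬝ᵥ w) := by rw [hwv]
      _ = (c • w) ⬝ᵥ (c • w) := by rw [smul_dotProduct, dotProduct_smul, smul_smul, smul_eq_mul, sq]
      _ = v ⬝ᵥ v := by rw [h]
  exact (mul_eq_right₀ hvv).mp this

theorem eq_of_mul_eq_of_sq_eq_one {R : Type*} [CommRing R] [LinearOrder R]
    [IsStrictOrderedRing R] {a b c : R} (ha : 0 ≤ a) (hb : 0 ≤ b) (hc : c ^ 2 = 1)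
    (h : c * a = b) : a = b := by
  rcases sq_eq_one_iff.mp hc with rfl | rfl
  · simpa using h
  · linarith

theorem stmt_7 (ρ ρ' : ℝ) (hρ : 0 ≤ ρ) (hρ' : 0 ≤ ρ') (hne : ρ ≠ ρ') :
    ¬ ∃ (B : Matrix (Fin 2) (Fin 2) ℝ) (r : ℝ),
        B.transpose * B = 1 ∧ r ≠ 0 ∧
        (r * B.det) • Fm (B.mulVec ![1, 0]) ρ = Fm ![1, 0] ρ' := by
  rintro ⟨B, r, hB, -, hF⟩
  rw [smul_Fm] at hF
  obtain ⟨hU, hρρ'⟩ := eq_and_eq_of_Fm_eq hF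
  have hc : (r * B.det) ^ 2 = 1 :=
    sq_eq_one_of_smul_eq hU (dotProduct_mulVec_self_of_transpose_mul_self hB _)
      (by simp)
  exact hne (eq_of_mul_eq_of_sq_eq_one hρ hρ' hc hρρ')
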